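/- In the pinned harmonic chain dynamics with generator G_t = A_t + γ S_flip + 2γ S_-, the fluctuation-dissipation identity holds for 1 ≤ x ≤ n-1: p_x² - ω₀² q_x² - (q_x - q_{x-1})² = ∇*[q_x(q_{x+1} - q_x)] + G_t(q_x p_x + γ q_x²), where ∇* f_x = f_{x-1} - f_x. -/

import Mathlib

open Real

/-- Clamped index implementing the Neumann conventions `q_{-1} = q_0`, `q_{n+1} = q_n`. -/
def chainIdx (n k : ℕ) : Fin (n + 1) := ⟨min k n, by omega⟩

/-- The discrete Neumann Laplacian `Δq_x = q_{x+1} + q_{x-1} - 2q_x` (with clamped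
indices at the boundary). -/
def chainLap (n : ℕ) (q : Fin (n + 1) → ℝ) (x : ℕ) : ℝ :=
  q (chainIdx n (x + 1)) + q (chainIdx n (x - 1)) - 2 * q (chainIdx n x)

/-- Momentum configuration with the sign flipped at site `y`. -/
def flipAt {n : ℕ} (p : Fin (n + 1) → ℝ) (y : Fin (n + 1)) : Fin (n + 1) → ℝ :=
  Function.update p y (-(p y))

/-- The generator `G_t = A_t + γ S_flip + 2γ S_-` of the pinned chain dynamics with
Langevin bath at temperature `Tm` on the left and forcing `Ft` on the right, acting
on functions of the configuration `(q, p)`. -/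
noncomputable def chainGen (n : ℕ) (γ ω₀ Tm Ft : ℝ)
    (F : (Fin (n + 1) → ℝ) × (Fin (n + 1) → ℝ) → ℝ)
    (z : (Fin (n + 1) → ℝ) × (Fin (n + 1) → ℝ)) : ℝ :=
  (∑ y : Fin (n + 1), z.2 y * fderiv ℝ F z (Pi.single y 1, 0))
  + (∑ y : Fin (n + 1), (chainLap n z.1 y.val - ω₀ ^ 2 * z.1 y) * fderiv ℝ F z (0, Pi.single y 1))
  + Ft * fderiv ℝ F z (0, Pi.single (chainIdx n n) 1)
  + γ * ∑ y : Fin (n + 1), (if y = 0 then 0 else F (z.1, flipAt z.2 y) - F z)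
  + 2 * γ * (Tm * fderiv ℝ (fun w => fderiv ℝ F w ((0 : Fin (n + 1) → ℝ), Pi.single 0 1)) z
        ((0 : Fin (n + 1) → ℝ), Pi.single 0 1)
      - z.2 0 * fderiv ℝ F z ((0 : Fin (n + 1) → ℝ), Pi.single 0 1))

noncomputable def obsDeriv (n : ℕ) (γ : ℝ) (a : Fin (n + 1))
    (z : (Fin (n + 1) → ℝ) × (Fin (n + 1) → ℝ)) :
    ((Fin (n + 1) → ℝ) × (Fin (n + 1) → ℝ)) →L[ℝ] ℝ :=
  let π1 : ((Fin (n + 1) → ℝ) × (Fin (n + 1) → ℝ)) →L[ℝ] ℝ :=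
    (ContinuousLinearMap.proj a).comp (ContinuousLinearMap.fst ℝ _ _)
  let π2 : ((Fin (n + 1) → ℝ) × (Fin (n + 1) → ℝ)) →L[ℝ] ℝ :=
    (ContinuousLinearMap.proj a).comp (ContinuousLinearMap.snd ℝ _ _)
  (z.1 a • π2 + z.2 a • π1) + γ • (z.1 a • π1 + z.1 a • π1)

lemma hasFDerivAt_obs (n : ℕ) (γ : ℝ) (a : Fin (n + 1))
    (z : (Fin (n + 1) → ℝ) × (Fin (n + 1) → ℝ)) :
    HasFDerivAt (fun w : (Fin (n + 1) → ℝ) × (Fin (n + 1) → ℝ) =>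
      w.1 a * w.2 a + γ * (w.1 a) ^ 2) (obsDeriv n γ a z) z := by
  set π1 : ((Fin (n + 1) → ℝ) × (Fin (n + 1) → ℝ)) →L[ℝ] ℝ :=
    (ContinuousLinearMap.proj a).comp (ContinuousLinearMap.fst ℝ _ _) with hπ1
  set π2 : ((Fin (n + 1) → ℝ) × (Fin (n + 1) → ℝ)) →L[ℝ] ℝ :=
    (ContinuousLinearMap.proj a).comp (ContinuousLinearMap.snd ℝ _ _) with hπ2
  have h1 : HasFDerivAt (fun w : (Fin (n + 1) → ℝ) × (Fin (n + 1) → ℝ) => w.1 a) π1 z :=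
    π1.hasFDerivAt
  have h2 : HasFDerivAt (fun w : (Fin (n + 1) → ℝ) × (Fin (n + 1) → ℝ) => w.2 a) π2 z :=
    π2.hasFDerivAt
  have key : HasFDerivAt (fun w : (Fin (n + 1) → ℝ) × (Fin (n + 1) → ℝ) =>
      w.1 a * w.2 a + γ * (w.1 a * w.1 a)) (obsDeriv n γ a z) z :=
    (h1.mul h2).add ((h1.mul h1).const_mul γ)
  have : (fun w : (Fin (n + 1) → ℝ) × (Fin (n + 1) → ℝ) =>
      w.1 a * w.2 a + γ * (w.1 a) ^ 2)
      = fun w => w.1 a * w.2 a + γ * (w.1 a * w.1 a) := by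
    funext w; ring
  rw [this]; exact key

lemma fderiv_obs_apply (n : ℕ) (γ : ℝ) (a : Fin (n + 1))
    (z : (Fin (n + 1) → ℝ) × (Fin (n + 1) → ℝ)) (u v : Fin (n + 1) → ℝ) :
    fderiv ℝ (fun w : (Fin (n + 1) → ℝ) × (Fin (n + 1) → ℝ) =>
        w.1 a * w.2 a + γ * (w.1 a) ^ 2) z (u, v)
      = u a * z.2 a + z.1 a * v a + γ * (2 * z.1 a * u a) := by
  rw [(hasFDerivAt_obs n γ a z).fderiv]
  simp [obsDeriv]
  ring

/-- The fluctuation-dissipation identity: for `1 ≤ x ≤ n-1`,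
`p_x² - ω₀² q_x² - (q_x - q_{x-1})² = ∇*[q_x(q_{x+1} - q_x)] + G_t(q_x p_x + γ q_x²)`,
where `∇* f_x = f_{x-1} - f_x`. -/
theorem fluctuation_dissipation (n : ℕ) (γ ω₀ Tm Ft : ℝ) (hγ : 0 < γ) (hω₀ : 0 < ω₀)
    (x : ℕ) (hx1 : 1 ≤ x) (hx2 : x ≤ n - 1) (hn : 1 ≤ n)
    (z : (Fin (n + 1) → ℝ) × (Fin (n + 1) → ℝ)) :
    (z.2 (chainIdx n x)) ^ 2 - ω₀ ^ 2 * (z.1 (chainIdx n x)) ^ 2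
        - (z.1 (chainIdx n x) - z.1 (chainIdx n (x - 1))) ^ 2
      = (z.1 (chainIdx n (x - 1)) * (z.1 (chainIdx n x) - z.1 (chainIdx n (x - 1)))
          - z.1 (chainIdx n x) * (z.1 (chainIdx n (x + 1)) - z.1 (chainIdx n x)))
        + chainGen n γ ω₀ Tm Ft
            (fun w => w.1 (chainIdx n x) * w.2 (chainIdx n x) + γ * (w.1 (chainIdx n x)) ^ 2) z := by
  have hxn : x < n := by omega
  set a : Fin (n + 1) := chainIdx n x with ha
  have hav : (a : ℕ) = x := by simp [ha, chainIdx]; omega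
  have ha0 : a ≠ 0 := by
    intro h
    have := congrArg Fin.val h
    rw [hav] at this
    simp at this
    omega
  have han : a ≠ chainIdx n n := by
    intro h
    have := congrArg Fin.val h
    rw [hav] at this
    simp [chainIdx] at this
    omega
  -- the five pieces of the generator
  have hsum1 : (∑ y : Fin (n + 1), z.2 y *
      fderiv ℝ (fun w : (Fin (n + 1) → ℝ) × (Fin (n + 1) → ℝ) =>
        w.1 a * w.2 a + γ * (w.1 a) ^ 2) z (Pi.single y 1, 0))
      = z.2 a * (z.2 a + γ * (2 * z.1 a)) := by
    rw [Finset.sum_eq_single a]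
    · rw [fderiv_obs_apply]
      simp
    · intro y _ hy
      rw [fderiv_obs_apply]
      rw [Pi.single_eq_of_ne (Ne.symm hy)]
      simp
    · simp
  have hsum2 : (∑ y : Fin (n + 1), (chainLap n z.1 y.val - ω₀ ^ 2 * z.1 y) *
      fderiv ℝ (fun w : (Fin (n + 1) → ℝ) × (Fin (n + 1) → ℝ) =>
        w.1 a * w.2 a + γ * (w.1 a) ^ 2) z (0, Pi.single y 1))
      = (chainLap n z.1 x - ω₀ ^ 2 * z.1 a) * z.1 a := by
    rw [Finset.sum_eq_single a]
    · rw [fderiv_obs_apply]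
      simp [hav]
    · intro y _ hy
      rw [fderiv_obs_apply]
      rw [Pi.single_eq_of_ne (Ne.symm hy)]
      simp
    · simp
  have hF : (fderiv ℝ (fun w : (Fin (n + 1) → ℝ) × (Fin (n + 1) → ℝ) =>
        w.1 a * w.2 a + γ * (w.1 a) ^ 2) z (0, Pi.single (chainIdx n n) 1)) = 0 := by
    rw [fderiv_obs_apply]
    rw [Pi.single_eq_of_ne han]
    simp
  have hflip : (∑ y : Fin (n + 1), (if y = 0 then (0:ℝ) else
      (z.1 a * flipAt z.2 y a + γ * (z.1 a) ^ 2) - (z.1 a * z.2 a + γ * (z.1 a) ^ 2)))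
      = -2 * (z.1 a * z.2 a) := by
    rw [Finset.sum_eq_single a]
    · rw [if_neg ha0]
      simp [flipAt]; ring
    · intro y _ hy
      rcases eq_or_ne y 0 with h | h
      · simp [h]
      · rw [if_neg h]
        rw [flipAt, Function.update_of_ne (Ne.symm hy)]
        ring
    · simp
  have hzero : (fderiv ℝ (fun w : (Fin (n + 1) → ℝ) × (Fin (n + 1) → ℝ) =>
        w.1 a * w.2 a + γ * (w.1 a) ^ 2) z ((0 : Fin (n + 1) → ℝ), Pi.single 0 1)) = 0 := by
    rw [fderiv_obs_apply]
    rw [Pi.single_eq_of_ne ha0]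
    simp
  have hsecond : (fderiv ℝ (fun w : (Fin (n + 1) → ℝ) × (Fin (n + 1) → ℝ) =>
      fderiv ℝ (fun w' : (Fin (n + 1) → ℝ) × (Fin (n + 1) → ℝ) =>
        w'.1 a * w'.2 a + γ * (w'.1 a) ^ 2) w ((0 : Fin (n + 1) → ℝ), Pi.single 0 1)) z
      ((0 : Fin (n + 1) → ℝ), Pi.single 0 1)) = 0 := by
    have heq : (fun w : (Fin (n + 1) → ℝ) × (Fin (n + 1) → ℝ) =>
        fderiv ℝ (fun w' : (Fin (n + 1) → ℝ) × (Fin (n + 1) → ℝ) =>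
          w'.1 a * w'.2 a + γ * (w'.1 a) ^ 2) w ((0 : Fin (n + 1) → ℝ), Pi.single 0 1))
        = fun _ => (0:ℝ) := by
      funext w
      rw [fderiv_obs_apply]
      rw [Pi.single_eq_of_ne ha0]
      simp
    rw [heq, fderiv_fun_const]
    simp
  rw [chainGen]
  rw [hsum1, hsum2, hF, hflip, hzero, hsecond]
  rw [chainLap, ← ha]
  ring
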